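/- Let α, N, k be natural numbers and let 𝔄 = (g_1,…,g_k) be a family of unitary (α+N)×(α+N) complex matrices. Let S, R be unitary k×k matrices such that E(𝔄; S, R) is invertible. Then χ(𝔄; S, R) belongs to the pseudo-unitary group U(kα, kα): with J the (2kα)×(2kα) block-diagonal matrix J = diag(1_{kα}, −1_{kα}), one has χ(𝔄; S, R)* · J · χ(𝔄; S, R) = J. Equivalently, for all p⁺, p⁻ and q⁺, q⁻ with (q⁺,q⁻) = χ(𝔄;S,R)·(p⁺,p⁻), one has ‖q⁺‖² − ‖q⁻‖² = ‖p⁺‖² − ‖p⁻‖². -/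

import Mathlib

open Matrix

/-- Block-diagonal matrix `ã` of the `a`-blocks of a multiple colligation. -/
noncomputable def aT {k : ℕ} {A I : Type*} [DecidableEq (Fin k)]
    (g : Fin k → Matrix (A ⊕ I) (A ⊕ I) ℂ) : Matrix (A × Fin k) (A × Fin k) ℂ :=
  blockDiagonal fun j => (g j).toBlocks₁₁

/-- Block-diagonal matrix `b̃` of the `b`-blocks of a multiple colligation. -/
noncomputable def bT {k : ℕ} {A I : Type*}
    (g : Fin k → Matrix (A ⊕ I) (A ⊕ I) ℂ) : Matrix (A × Fin k) (I × Fin k) ℂ :=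
  blockDiagonal fun j => (g j).toBlocks₁₂

/-- Block-diagonal matrix `c̃` of the `c`-blocks of a multiple colligation. -/
noncomputable def cT {k : ℕ} {A I : Type*}
    (g : Fin k → Matrix (A ⊕ I) (A ⊕ I) ℂ) : Matrix (I × Fin k) (A × Fin k) ℂ :=
  blockDiagonal fun j => (g j).toBlocks₂₁

/-- Block-diagonal matrix `d̃` of the `d`-blocks of a multiple colligation. -/
noncomputable def dT {k : ℕ} {A I : Type*}
    (g : Fin k → Matrix (A ⊕ I) (A ⊕ I) ℂ) : Matrix (I × Fin k) (I × Fin k) ℂ :=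
  blockDiagonal fun j => (g j).toBlocks₂₂

/-- `S̃`: the Kronecker-type block matrix whose `(i,j)` block is `s_{ij} · 1`. -/
def sT {k : ℕ} (I : Type*) [DecidableEq I] (S : Matrix (Fin k) (Fin k) ℂ) :
    Matrix (I × Fin k) (I × Fin k) ℂ :=
  Matrix.of fun p q => if p.1 = q.1 then S p.2 q.2 else 0

/-- The multivariate characteristic function `χ(𝔄; S) = ã + b̃·(S̃ − d̃)⁻¹·c̃`. -/
noncomputable def chiM {k : ℕ} {A I : Type*} [Fintype A] [Fintype I] [DecidableEq I]
    (g : Fin k → Matrix (A ⊕ I) (A ⊕ I) ℂ) (S : Matrix (Fin k) (Fin k) ℂ) :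
    Matrix (A × Fin k) (A × Fin k) ℂ :=
  aT g + bT g * (sT I S - dT g)⁻¹ * cT g

/-- The family of inverse-transpose matrices `g_j' = (g_jᵗ)⁻¹`. -/
noncomputable def gP {k : ℕ} {A I : Type*} [Fintype A] [Fintype I]
    [DecidableEq A] [DecidableEq I]
    (g : Fin k → Matrix (A ⊕ I) (A ⊕ I) ℂ) : Fin k → Matrix (A ⊕ I) (A ⊕ I) ℂ :=
  fun j => ((g j)ᵀ)⁻¹

/-- `E(𝔄; S, R) = d̃ − S̃·d̃'·R̃`, where `d̃'` is the block-diagonal matrix of the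
`d`-blocks of the inverse transposes `(g_jᵗ)⁻¹`. -/
noncomputable def EMat {k : ℕ} {A I : Type*} [Fintype A] [Fintype I]
    [DecidableEq A] [DecidableEq I]
    (g : Fin k → Matrix (A ⊕ I) (A ⊕ I) ℂ) (S R : Matrix (Fin k) (Fin k) ℂ) :
    Matrix (I × Fin k) (I × Fin k) ℂ :=
  dT g - sT I S * dT (gP g) * sT I R

/-- The two-variable characteristic function `χ(𝔄; S, R)`, a `2 × 2` block matrix with
blocks of size `kα`:
`[[ã − b̃·E⁻¹·c̃, b̃·E⁻¹·S̃·c̃'], [−b̃'·R̃·E⁻¹·c̃, ã' + b̃'·R̃·E⁻¹·S̃·c̃']]`. -/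
noncomputable def chi2v {k : ℕ} {A I : Type*} [Fintype A] [Fintype I]
    [DecidableEq A] [DecidableEq I]
    (g : Fin k → Matrix (A ⊕ I) (A ⊕ I) ℂ) (S R : Matrix (Fin k) (Fin k) ℂ) :
    Matrix ((A × Fin k) ⊕ (A × Fin k)) ((A × Fin k) ⊕ (A × Fin k)) ℂ :=
  fromBlocks
    (aT g - bT g * (EMat g S R)⁻¹ * cT g)
    (bT g * (EMat g S R)⁻¹ * sT I S * cT (gP g))
    (-(bT (gP g) * sT I R * (EMat g S R)⁻¹ * cT g))
    (aT (gP g) + bT (gP g) * sT I R * (EMat g S R)⁻¹ * sT I S * cT (gP g))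

/-!
Write a vector as `(p, p')` and put `x = E⁻¹ (S̃ c̃' p' - c̃ p)`, `y = R̃ x`. Then
`χ (p, p') = (ã p + b̃ x, ã' p' + b̃' y)`, and the definition of `E` says exactly that the two
colligations are coupled through `S̃`: `S̃ (c̃' p' + d̃' y) = c̃ p + d̃ x`. Both colligations
`[[ã, b̃], [c̃, d̃]]` and `[[ã', b̃'], [c̃', d̃']]` are unitary (the second because `(gᵗ)⁻¹` is the
entrywise conjugate of `g`), and `S̃`, `R̃` are isometries, so by conservation of energy
`‖ã p + b̃ x‖² - ‖ã' p' + b̃' y‖²`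
`= (‖p‖² + ‖x‖² - ‖c̃ p + d̃ x‖²) - (‖p'‖² + ‖y‖² - ‖c̃' p' + d̃' y‖²) = ‖p‖² - ‖p'‖²`.
We run this argument with matrices in place of vectors, taking `(p, p')` to be the identity,
so that no polarization is needed.
-/

theorem Matrix.fromBlocks_eq_fromRows_mul_fromCols_add {𝕜 : Type*} [Semiring 𝕜]
    {l l' m m' : Type*} [Fintype m] [Fintype m'] [DecidableEq m] [DecidableEq m']
    (a : Matrix l m 𝕜) (b : Matrix l m' 𝕜) (c : Matrix l' m 𝕜) (d : Matrix l' m' 𝕜) :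
    fromBlocks a b c d
      = fromRows
          (a * (fromCols 1 0 : Matrix m (m ⊕ m') 𝕜) + b * (fromCols 0 1 : Matrix m' (m ⊕ m') 𝕜))
          (c * (fromCols 1 0 : Matrix m (m ⊕ m') 𝕜) + d * (fromCols 0 1 : Matrix m' (m ⊕ m') 𝕜)) := by
  rw [mul_fromCols, mul_fromCols, mul_fromCols, mul_fromCols]
  ext (i | i) (j | j) <;> simp

section CoupledIsometries

variable {𝕜 : Type*} [CommRing 𝕜] [StarRing 𝕜] {l m m' n n' p p' : Type*}
  [Fintype m] [Fintype m'] [Fintype n] [Fintype n'] [Fintype p] [Fintype p']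
  [DecidableEq n] [DecidableEq n'] [DecidableEq p] [DecidableEq p']

theorem Matrix.conjTranspose_mul_mul_self_of_isometry {S : Matrix m n 𝕜} (hS : Sᴴ * S = 1)
    (Z : Matrix n l 𝕜) : (S * Z)ᴴ * (S * Z) = Zᴴ * Z := by
  rw [conjTranspose_mul, Matrix.mul_assoc, ← Matrix.mul_assoc Sᴴ, hS, Matrix.one_mul]

theorem Matrix.fromRows_conjTranspose_mul_self (U : Matrix m l 𝕜) (V : Matrix m' l 𝕜) :
    (fromRows U V)ᴴ * fromRows U V = Uᴴ * U + Vᴴ * V := by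
  rw [conjTranspose_fromRows_eq_fromCols_conjTranspose, fromCols_mul_fromRows]

theorem Matrix.fromRows_conjTranspose_mul_signature_mul [DecidableEq m] [DecidableEq m']
    (U : Matrix m l 𝕜) (V : Matrix m' l 𝕜) :
    (fromRows U V)ᴴ * (fromBlocks 1 0 0 (-1) : Matrix (m ⊕ m') (m ⊕ m') 𝕜) * fromRows U V
      = Uᴴ * U - Vᴴ * V := by
  rw [Matrix.mul_assoc, fromBlocks_mul_fromRows, conjTranspose_fromRows_eq_fromCols_conjTranspose,
    fromCols_mul_fromRows]
  simp [sub_eq_add_neg]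

variable {A : Matrix m n 𝕜} {B : Matrix m p 𝕜} {C : Matrix m' n 𝕜} {D : Matrix m' p 𝕜}

theorem Matrix.conjTranspose_mul_self_add_of_fromBlocks_isometry
    (hG : (fromBlocks A B C D)ᴴ * fromBlocks A B C D = 1) (P : Matrix n l 𝕜) (X : Matrix p l 𝕜) :
    (A * P + B * X)ᴴ * (A * P + B * X) + (C * P + D * X)ᴴ * (C * P + D * X)
      = Pᴴ * P + Xᴴ * X := by
  rw [← fromRows_conjTranspose_mul_self, ← fromBlocks_mul_fromRows,
    conjTranspose_mul_mul_self_of_isometry hG, fromRows_conjTranspose_mul_self]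

variable {r q : Type*} [Fintype r] [Fintype q] [DecidableEq q]
  {A' : Matrix r n' 𝕜} {B' : Matrix r p' 𝕜} {C' : Matrix q n' 𝕜} {D' : Matrix q p' 𝕜}

theorem Matrix.conjTranspose_mul_self_sub_eq_of_coupled_isometries
    (hG : (fromBlocks A B C D)ᴴ * fromBlocks A B C D = 1)
    (hG' : (fromBlocks A' B' C' D')ᴴ * fromBlocks A' B' C' D' = 1)
    {S : Matrix m' q 𝕜} (hS : Sᴴ * S = 1) {R : Matrix p' p 𝕜} (hR : Rᴴ * R = 1)
    {P : Matrix n l 𝕜} {P' : Matrix n' l 𝕜} {X : Matrix p l 𝕜}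
    (hcouple : S * (C' * P' + D' * (R * X)) = C * P + D * X) :
    (A * P + B * X)ᴴ * (A * P + B * X) - (A' * P' + B' * (R * X))ᴴ * (A' * P' + B' * (R * X))
      = Pᴴ * P - P'ᴴ * P' := by
  have h := conjTranspose_mul_self_add_of_fromBlocks_isometry hG P X
  have h' := conjTranspose_mul_self_add_of_fromBlocks_isometry hG' P' (R * X)
  rw [← hcouple, conjTranspose_mul_mul_self_of_isometry hS] at h
  rw [conjTranspose_mul_mul_self_of_isometry hR] at h'
  rw [eq_sub_of_add_eq h, eq_sub_of_add_eq h']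
  abel

end CoupledIsometries

section Colligation

variable {k : ℕ} {A I : Type*}

theorem fromBlocks_aT_bT_cT_dT (u : Fin k → Matrix (A ⊕ I) (A ⊕ I) ℂ) :
    fromBlocks (aT u) (bT u) (cT u) (dT u)
      = (blockDiagonal u).submatrix (Equiv.sumProdDistrib A I (Fin k)).symm
          (Equiv.sumProdDistrib A I (Fin k)).symm := by
  ext (⟨a, j⟩ | ⟨i, j⟩) (⟨a', j'⟩ | ⟨i', j'⟩) <;>
    simp [aT, bT, cT, dT, blockDiagonal_apply, toBlocks₁₁, toBlocks₁₂, toBlocks₂₁, toBlocks₂₂]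

theorem fromBlocks_aT_bT_cT_dT_conjTranspose_mul_self [Fintype A] [Fintype I] [DecidableEq A]
    [DecidableEq I] {u : Fin k → Matrix (A ⊕ I) (A ⊕ I) ℂ} (hu : ∀ j, (u j)ᴴ * u j = 1) :
    (fromBlocks (aT u) (bT u) (cT u) (dT u))ᴴ * fromBlocks (aT u) (bT u) (cT u) (dT u) = 1 := by
  rw [fromBlocks_aT_bT_cT_dT, conjTranspose_submatrix, submatrix_mul_equiv,
    blockDiagonal_conjTranspose, ← blockDiagonal_mul, funext hu, ← Pi.one_def, blockDiagonal_one,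
    submatrix_one_equiv]

open Kronecker in
theorem sT_eq_one_kronecker [DecidableEq I] (S : Matrix (Fin k) (Fin k) ℂ) :
    sT I S = (1 : Matrix I I ℂ) ⊗ₖ S := by
  ext ⟨i, j⟩ ⟨i', j'⟩
  simp [sT, kroneckerMap_apply, one_apply, ite_mul]

theorem sT_conjTranspose_mul_self [Fintype I] [DecidableEq I] {S : Matrix (Fin k) (Fin k) ℂ}
    (hS : Sᴴ * S = 1) : (sT I S)ᴴ * sT I S = 1 := by
  rw [sT_eq_one_kronecker, conjTranspose_kronecker, ← mul_kronecker_mul, conjTranspose_one,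
    Matrix.one_mul, hS, one_kronecker_one]

theorem gP_mem_unitaryGroup [Fintype A] [Fintype I] [DecidableEq A] [DecidableEq I]
    {g : Fin k → Matrix (A ⊕ I) (A ⊕ I) ℂ} {j : Fin k} (hg : g j ∈ unitaryGroup (A ⊕ I) ℂ) : gP g j ∈ unitaryGroup (A ⊕ I) ℂ := by
  have hgT := transpose_mem_unitaryGroup_iff.mpr hg
  rw [gP, inv_eq_left_inv (mem_unitaryGroup_iff'.mp hgT)]
  exact Unitary.star_mem hgT

end Colligation

/-- for a family of unitary colligations and unitary `S`, `R` with
`E(𝔄; S, R)` invertible, the two-variable characteristic function lies in the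
pseudo-unitary group `U(kα, kα)`: `χ* · J · χ = J` with `J = diag(1, −1)`. -/
theorem chi2v_pseudoUnitary {α N k : ℕ}
    (g : Fin k → Matrix (Fin α ⊕ Fin N) (Fin α ⊕ Fin N) ℂ)
    (hg : ∀ j, g j ∈ Matrix.unitaryGroup (Fin α ⊕ Fin N) ℂ)
    (S R : Matrix (Fin k) (Fin k) ℂ)
    (hS : S ∈ Matrix.unitaryGroup (Fin k) ℂ) (hR : R ∈ Matrix.unitaryGroup (Fin k) ℂ)
    (hE : IsUnit (EMat g S R)) :
    (chi2v g S R)ᴴ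
        * fromBlocks (1 : Matrix (Fin α × Fin k) (Fin α × Fin k) ℂ) 0 0 (-1)
        * chi2v g S R
      = fromBlocks (1 : Matrix (Fin α × Fin k) (Fin α × Fin k) ℂ) 0 0 (-1) := by
  set P : Matrix (Fin α × Fin k) ((Fin α × Fin k) ⊕ (Fin α × Fin k)) ℂ := fromCols 1 0 with hP
  set P' : Matrix (Fin α × Fin k) ((Fin α × Fin k) ⊕ (Fin α × Fin k)) ℂ := fromCols 0 1 with hP'
  set X := (EMat g S R)⁻¹ * (sT (Fin N) S * cT (gP g) * P' - cT g * P) with hX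
  have hχ : chi2v g S R
      = fromRows (aT g * P + bT g * X) (aT (gP g) * P' + bT (gP g) * (sT (Fin N) R * X)) := by
    rw [chi2v, fromBlocks_eq_fromRows_mul_fromCols_add, ← hP, ← hP', hX]
    congr 1 <;>
      simp only [Matrix.sub_mul, Matrix.add_mul, Matrix.neg_mul, Matrix.mul_sub,
        Matrix.mul_assoc] <;> abel
  have hcouple : sT (Fin N) S * (cT (gP g) * P' + dT (gP g) * (sT (Fin N) R * X))
      = cT g * P + dT g * X := by
    have hEX : EMat g S R * X = sT (Fin N) S * cT (gP g) * P' - cT g * P := by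
      rw [← Matrix.mul_assoc, mul_nonsing_inv _ ((isUnit_iff_isUnit_det _).mp hE), Matrix.one_mul]
    simp only [EMat, Matrix.sub_mul, Matrix.mul_assoc] at hEX
    rw [Matrix.mul_add, add_comm (cT g * P)]
    exact (sub_eq_sub_iff_add_eq_add.mp hEX).symm
  have hPP' : fromRows P P' = 1 := by
    rw [fromRows_fromCols_eq_fromBlocks, fromBlocks_one]
  calc _ = _ := by rw [hχ, fromRows_conjTranspose_mul_signature_mul]
    _ = Pᴴ * P - P'ᴴ * P' :=
      conjTranspose_mul_self_sub_eq_of_coupled_isometries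
        (fromBlocks_aT_bT_cT_dT_conjTranspose_mul_self fun j => mem_unitaryGroup_iff'.mp (hg j))
        (fromBlocks_aT_bT_cT_dT_conjTranspose_mul_self
          fun j => mem_unitaryGroup_iff'.mp (gP_mem_unitaryGroup (hg j)))
        (sT_conjTranspose_mul_self (mem_unitaryGroup_iff'.mp hS))
        (sT_conjTranspose_mul_self (mem_unitaryGroup_iff'.mp hR)) hcouple
    _ = _ := by rw [← fromRows_conjTranspose_mul_signature_mul, hPP', conjTranspose_one,
      Matrix.one_mul, Matrix.mul_one]
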